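/- arXiv:0910.0428 — 5 statements merged into one kernel-verified Lean document; each statement's English description precedes it below -/
import Mathlib

section
/- Let p_n denote the n-th prime with n ≥ 2. Then p_n is an RL-prime (both an R-prime and an L-prime) if and only if π(p_{n-1}/2) = π(p_{n+1}/2). -/
noncomputable def pp (n : ℕ) : ℕ := Nat.nth Nat.Prime (n - 1)

def IsRPrime (n : ℕ) : Prop :=
  ∃ k ≥ 1, 2 * pp k < pp n ∧ pp n < pp (n + 1) ∧ pp (n + 1) < 2 * pp (k + 1)

def IsLPrime (n : ℕ) : Prop :=
  ∃ k ≥ 1, 2 * pp k < pp (n - 1) ∧ pp (n - 1) < pp n ∧ pp n < 2 * pp (k + 1)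

private lemma pi_le_iff {m b : ℕ} :
    Nat.primeCounting m ≤ b ↔ m < Nat.nth Nat.Prime b := by
  rw [Nat.primeCounting, Nat.primeCounting',
    Nat.count_le_iff_le_nth Nat.infinite_setOf_prime]
  exact Nat.succ_le_iff

private lemma lt_pi_iff {a m : ℕ} :
    a < Nat.primeCounting m ↔ Nat.nth Nat.Prime a ≤ m := by
  rw [Nat.primeCounting, Nat.primeCounting',
    Nat.lt_nth_iff_count_lt Nat.infinite_setOf_prime]
  exact Nat.lt_succ_iff

private lemma odd_nth {i : ℕ} (hi : 1 ≤ i) : Nat.nth Nat.Prime i % 2 = 1 := by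
  have hp : (Nat.nth Nat.Prime i).Prime := Nat.prime_nth_prime i
  have h2 : Nat.nth Nat.Prime 0 = 2 := Nat.nth_prime_zero_eq_two
  have hlt : Nat.nth Nat.Prime 0 < Nat.nth Nat.Prime i :=
    (Nat.nth_lt_nth Nat.infinite_setOf_prime).mpr hi
  rcases Nat.Prime.eq_two_or_odd hp with h | h
  · omega
  · exact h

theorem stmt2 (n : ℕ) (hn : 2 ≤ n) :
    (IsRPrime n ∧ IsLPrime n) ↔
      Nat.primeCounting (pp (n - 1) / 2) = Nat.primeCounting (pp (n + 1) / 2) := by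
  have hinf := Nat.infinite_setOf_prime
  constructor
  · rintro ⟨⟨k, hk1, hR1, hR2, hR3⟩, ⟨k', hk'1, hL1, hL2, hL3⟩⟩
    have h1 : k' ≤ Nat.primeCounting (pp (n - 1) / 2) := by
      have : k' - 1 < Nat.primeCounting (pp (n - 1) / 2) := by
        rw [lt_pi_iff, Nat.le_div_iff_mul_le (by norm_num : 0 < 2)]
        show pp k' * 2 ≤ pp (n - 1)
        omega
      omega
    have h2 : Nat.primeCounting (pp (n + 1) / 2) ≤ k := by
      rw [pi_le_iff]
      show pp (n + 1) / 2 < pp (k + 1)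
      rw [Nat.div_lt_iff_lt_mul (by norm_num : 0 < 2)]
      omega
    have h3 : k ≤ k' := by
      have hqq : Nat.nth Nat.Prime (k - 1) < Nat.nth Nat.Prime k' := by
        have e1 : pp k = Nat.nth Nat.Prime (k - 1) := rfl
        have e2 : pp (k' + 1) = Nat.nth Nat.Prime k' := by simp [pp]
        omega
      have := (Nat.nth_lt_nth hinf).mp hqq
      omega
    have h4 : Nat.primeCounting (pp (n - 1) / 2) ≤ Nat.primeCounting (pp (n + 1) / 2) := by
      apply Nat.monotone_primeCounting
      apply Nat.div_le_div_right
      exact le_of_lt (lt_trans hL2 hR2)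
    omega
  · intro h
    set k := Nat.primeCounting (pp (n - 1) / 2) with hk
    have hk1 : 1 ≤ k := by
      have h9 : 0 < Nat.primeCounting (pp (n + 1) / 2) := by
        rw [lt_pi_iff, Nat.nth_prime_zero_eq_two, Nat.le_div_iff_mul_le (by norm_num : 0 < 2)]
        show 2 * 2 ≤ pp (n + 1)
        have h5 : Nat.nth Nat.Prime 2 ≤ Nat.nth Nat.Prime n := (Nat.nth_le_nth hinf).mpr (by omega)
        have h6 : Nat.nth Nat.Prime 1 < Nat.nth Nat.Prime 2 := (Nat.nth_lt_nth hinf).mpr (by omega)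
        have h7 : Nat.nth Nat.Prime 0 < Nat.nth Nat.Prime 1 := (Nat.nth_lt_nth hinf).mpr (by omega)
        have h0 : Nat.nth Nat.Prime 0 = 2 := Nat.nth_prime_zero_eq_two
        show 2 * 2 ≤ Nat.nth Nat.Prime n
        omega
      omega
    have ha4 : 4 ≤ pp (n - 1) := by
      have h9 : 0 < k := hk1
      rw [hk, lt_pi_iff, Nat.nth_prime_zero_eq_two,
        Nat.le_div_iff_mul_le (by norm_num : 0 < 2)] at h9
      omega
    have han : 1 ≤ n - 1 - 1 := by
      by_contra hcon
      have h01 : n - 1 - 1 = 0 := by omega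
      have he : pp (n - 1) = Nat.nth Nat.Prime 0 := by rw [pp, h01]
      rw [Nat.nth_prime_zero_eq_two] at he
      omega
    have haodd : pp (n - 1) % 2 = 1 := odd_nth han
    have hkle : 2 * pp k < pp (n - 1) := by
      have h6 : k - 1 < Nat.primeCounting (pp (n - 1) / 2) := by omega
      rw [lt_pi_iff, Nat.le_div_iff_mul_le (by norm_num : 0 < 2)] at h6
      have hd := Nat.div_add_mod (pp (n - 1)) 2
      have e1 : pp k = Nat.nth Nat.Prime (k - 1) := rfl
      omega
    have hkge : pp (n + 1) < 2 * pp (k + 1) := by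
      have h7 : Nat.primeCounting (pp (n + 1) / 2) ≤ k := by omega
      rw [pi_le_iff, Nat.div_lt_iff_lt_mul (by norm_num : 0 < 2)] at h7
      have e2 : pp (k + 1) = Nat.nth Nat.Prime k := by simp [pp]
      omega
    have hmono1 : pp (n - 1) < pp n := by
      show Nat.nth Nat.Prime (n - 1 - 1) < Nat.nth Nat.Prime (n - 1)
      exact (Nat.nth_lt_nth hinf).mpr (by omega)
    have hmono2 : pp n < pp (n + 1) := by
      show Nat.nth Nat.Prime (n - 1) < Nat.nth Nat.Prime (n + 1 - 1)
      exact (Nat.nth_lt_nth hinf).mpr (by omega)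
    exact ⟨⟨k, hk1, by omega, hmono2, hkge⟩, ⟨k, hk1, hkle, hmono1, by omega⟩⟩
end

section
/- Let R_1 < R_2 < ... be the increasing enumeration of R-primes and L_1 < L_2 < ... the increasing enumeration of L-primes. Then for every n, R_n ≤ L_n ≤ R_{n+1}, i.e., the two sequences interleave: R_1 ≤ L_1 ≤ R_2 ≤ L_2 ≤ .... -/
/-- `q` is an R-prime (as a number): `q = p_n` for some `n ≥ 1` with
`2p_k < p_n < p_{n+1} < 2p_{k+1}` for some `k ≥ 1`. -/
def RP (q : ℕ) : Prop :=
  ∃ n ≥ 1, q = pp n ∧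
    ∃ k ≥ 1, 2 * pp k < pp n ∧ pp n < pp (n + 1) ∧ pp (n + 1) < 2 * pp (k + 1)

def LP (q : ℕ) : Prop :=
  ∃ n ≥ 2, q = pp n ∧
    ∃ k ≥ 1, 2 * pp k < pp (n - 1) ∧ pp (n - 1) < pp n ∧ pp n < 2 * pp (k + 1)

open scoped Classical

private lemma Pinf : {p : ℕ | p.Prime}.Infinite := Nat.infinite_setOf_prime

private lemma rp_iff (q : ℕ) : RP q ↔ ∃ m, q = Nat.nth Nat.Prime m ∧
    ∃ k ≥ 1, 2 * pp k < Nat.nth Nat.Prime m ∧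
      Nat.nth Nat.Prime (m + 1) < 2 * pp (k + 1) := by
  constructor
  · rintro ⟨n, hn, rfl, k, hk, h1, h2, h3⟩
    have hm : n - 1 + 1 = n := by omega
    refine ⟨n - 1, rfl, k, hk, h1, ?_⟩
    rw [hm]; exact h3
  · rintro ⟨m, rfl, k, hk, h1, h2⟩
    refine ⟨m + 1, by omega, rfl, k, hk, h1, ?_, h2⟩
    exact (Nat.nth_lt_nth Pinf).2 (Nat.lt_succ_self m)

private lemma lp_iff (q : ℕ) : LP q ↔ ∃ m ≥ 1, q = Nat.nth Nat.Prime m ∧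
    ∃ k ≥ 1, 2 * pp k < Nat.nth Nat.Prime (m - 1) ∧
      Nat.nth Nat.Prime m < 2 * pp (k + 1) := by
  constructor
  · rintro ⟨n, hn, rfl, k, hk, h1, h2, h3⟩
    exact ⟨n - 1, by omega, rfl, k, hk, h1, h3⟩
  · rintro ⟨m, hm, rfl, k, hk, h1, h2⟩
    refine ⟨m + 1, by omega, rfl, k, hk, h1, ?_, h2⟩
    exact (Nat.nth_lt_nth Pinf).2 (by omega)

private lemma count_key (m : ℕ) :
    Nat.count LP (Nat.nth Nat.Prime (m + 1)) = Nat.count RP (Nat.nth Nat.Prime m) := by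
  rw [Nat.count_eq_card_filter_range, Nat.count_eq_card_filter_range]
  apply Finset.card_bij
    (fun l _ => Nat.nth Nat.Prime (Nat.count Nat.Prime l - 1))
  · -- maps into the target
    intro l hl
    simp only [Finset.mem_filter, Finset.mem_range] at hl ⊢
    obtain ⟨hlt, hlp⟩ := hl
    obtain ⟨j, hj1, rfl, k, hk, h1, h2⟩ := (lp_iff _).1 hlp
    rw [Nat.count_nth_of_infinite Pinf]
    have hjm : j < m + 1 := (Nat.nth_lt_nth Pinf).1 hlt
    constructor
    · exact (Nat.nth_lt_nth Pinf).2 (by omega)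
    · refine (rp_iff _).2 ⟨j - 1, rfl, k, hk, h1, ?_⟩
      have : j - 1 + 1 = j := by omega
      rw [this]; exact h2
  · -- injective
    intro l1 h1 l2 h2 heq
    simp only [Finset.mem_filter, Finset.mem_range] at h1 h2
    obtain ⟨j1, hj1, rfl, -⟩ := (lp_iff _).1 h1.2
    obtain ⟨j2, hj2, rfl, -⟩ := (lp_iff _).1 h2.2
    rw [Nat.count_nth_of_infinite Pinf, Nat.count_nth_of_infinite Pinf] at heq
    have := (Nat.nth_lt_nth Pinf (k := j1 - 1) (n := j2 - 1)).symm
    have hj : j1 - 1 = j2 - 1 := by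
      by_contra hne
      rcases Nat.lt_or_ge (j1 - 1) (j2 - 1) with h | h
      · exact absurd heq (Nat.ne_of_lt ((Nat.nth_lt_nth Pinf).2 h))
      · have h' : j2 - 1 < j1 - 1 := by omega
        exact absurd heq.symm (Nat.ne_of_lt ((Nat.nth_lt_nth Pinf).2 h'))
    have : j1 = j2 := by omega
    rw [this]
  · -- surjective
    intro r hr
    simp only [Finset.mem_filter, Finset.mem_range] at hr
    obtain ⟨hlt, hrp⟩ := hr
    obtain ⟨i, rfl, k, hk, h1, h2⟩ := (rp_iff _).1 hrp
    have him : i < m := (Nat.nth_lt_nth Pinf).1 hlt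
    refine ⟨Nat.nth Nat.Prime (i + 1), ?_, ?_⟩
    · simp only [Finset.mem_filter, Finset.mem_range]
      refine ⟨(Nat.nth_lt_nth Pinf).2 (by omega), ?_⟩
      exact (lp_iff _).2 ⟨i + 1, by omega, rfl, k, hk, h1, h2⟩
    · rw [Nat.count_nth_of_infinite Pinf]
      simp

/-- `Nat.nth RP 0 = R_1`, `Nat.nth LP 0 = L_1`, etc. -/
theorem stmt6 (hR : {q : ℕ | RP q}.Infinite) (hL : {q : ℕ | LP q}.Infinite) :
    ∀ n : ℕ, Nat.nth RP n ≤ Nat.nth LP n ∧ Nat.nth LP n ≤ Nat.nth RP (n + 1) := by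
  intro n
  have hr : RP (Nat.nth RP n) := Nat.nth_mem_of_infinite hR n
  obtain ⟨m, hm, k, hk, h1, h2⟩ := (rp_iff _).1 hr
  have hl : LP (Nat.nth Nat.Prime (m + 1)) :=
    (lp_iff _).2 ⟨m + 1, by omega, rfl, k, hk, by simpa using h1, h2⟩
  have hcount : Nat.count LP (Nat.nth Nat.Prime (m + 1)) = n := by
    rw [count_key, ← hm, Nat.count_nth_of_infinite hR]
  have hLn : Nat.nth LP n = Nat.nth Nat.Prime (m + 1) := by
    rw [← hcount, Nat.nth_count hl]
  constructor
  · rw [hLn, hm]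
    exact (Nat.nth_le_nth Pinf).2 (by omega)
  · -- L_n ≤ R_{n+1}
    have hr' : RP (Nat.nth RP (n + 1)) := Nat.nth_mem_of_infinite hR (n + 1)
    obtain ⟨m', hm', -⟩ := (rp_iff _).1 hr'
    have hlt : Nat.nth RP n < Nat.nth RP (n + 1) :=
      (Nat.nth_lt_nth hR).2 (Nat.lt_succ_self n)
    rw [hm, hm'] at hlt
    have : m < m' := (Nat.nth_lt_nth Pinf).1 hlt
    rw [hLn, hm']
    exact (Nat.nth_le_nth Pinf).2 (by omega)
end

section
/- The number of R-primes not exceeding x equals the number of L-primes not exceeding x, up to an error of at most 1; more precisely, the count of R-primes ≤ x minus the count of L-primes ≤ x is 0 or 1 for every real x. -/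
private lemma pp_prime (n : ℕ) : (pp n).Prime := Nat.prime_nth_prime _

noncomputable def nxt (q : ℕ) : ℕ := Nat.nth Nat.Prime (Nat.count Nat.Prime q + 1)
noncomputable def prv (q : ℕ) : ℕ := Nat.nth Nat.Prime (Nat.count Nat.Prime q - 1)

private lemma count_pp {n : ℕ} (_hn : 1 ≤ n) :
    Nat.count Nat.Prime (pp n) = n - 1 :=
  Nat.count_nth_of_infinite Nat.infinite_setOf_prime _

private lemma nxt_pp {n : ℕ} (hn : 1 ≤ n) : nxt (pp n) = pp (n + 1) := by
  rw [nxt, count_pp hn]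
  show Nat.nth Nat.Prime (n - 1 + 1) = Nat.nth Nat.Prime (n + 1 - 1)
  congr 1; omega

private lemma prv_pp {n : ℕ} (hn : 2 ≤ n) : prv (pp n) = pp (n - 1) := by
  rw [prv, count_pp (by omega)]
  show Nat.nth Nat.Prime (n - 1 - 1) = Nat.nth Nat.Prime (n - 1 - 1)
  rfl

private lemma nxt_le {q r : ℕ} (hq : q.Prime) (hr : r.Prime) (h : q < r) : nxt q ≤ r := by
  have h1 : Nat.count Nat.Prime (q + 1) = Nat.count Nat.Prime q + 1 := by
    rw [Nat.count_succ, if_pos hq]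
  have h2 : Nat.count Nat.Prime q + 1 ≤ Nat.count Nat.Prime r := by
    rw [← h1]; exact Nat.count_monotone _ h
  calc nxt q ≤ Nat.nth Nat.Prime (Nat.count Nat.Prime r) :=
        (Nat.nth_le_nth Nat.infinite_setOf_prime).2 h2
    _ = r := Nat.nth_count hr

theorem stmt7 (x : ℝ) :
    {q : ℕ | RP q ∧ (q : ℝ) ≤ x}.ncard = {q : ℕ | LP q ∧ (q : ℝ) ≤ x}.ncard ∨
    {q : ℕ | RP q ∧ (q : ℝ) ≤ x}.ncard = {q : ℕ | LP q ∧ (q : ℝ) ≤ x}.ncard + 1 := by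
  set S := {q : ℕ | RP q ∧ (q : ℝ) ≤ x} with hSdef
  set T := {q : ℕ | LP q ∧ (q : ℝ) ≤ x} with hTdef
  have hbd : ∀ q : ℕ, (q : ℝ) ≤ x → q ≤ ⌈x⌉₊ := fun q hq => by
    exact_mod_cast hq.trans (Nat.le_ceil x)
  have hSfin : S.Finite := (Set.finite_Iic ⌈x⌉₊).subset (fun q hq => hbd q hq.2)
  have hTfin : T.Finite := (Set.finite_Iic ⌈x⌉₊).subset (fun q hq => hbd q hq.2)
  -- T.ncard ≤ S.ncard via prv
  have h1 : T.ncard ≤ S.ncard := by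
    apply Set.ncard_le_ncard_of_injOn prv _ _ hSfin
    · rintro q ⟨⟨n, hn2, rfl, k, hk, c1, c2, c3⟩, hx⟩
      rw [prv_pp hn2]
      refine ⟨⟨n - 1, by omega, rfl, k, hk, c1, ?_, ?_⟩, ?_⟩
      · have : n - 1 + 1 = n := by omega
        rw [this]; exact c2
      · have : n - 1 + 1 = n := by omega
        rw [this]; exact c3
      · exact le_trans (by exact_mod_cast c2.le) hx
    · intro q hq q' hq' hpq
      obtain ⟨⟨n, hn2, rfl, -⟩, -⟩ := hq
      obtain ⟨⟨m, hm2, rfl, -⟩, -⟩ := hq'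
      have : nxt (prv (pp n)) = nxt (prv (pp m)) := by rw [hpq]
      rwa [prv_pp hn2, prv_pp hm2, nxt_pp (by omega), nxt_pp (by omega),
        show n - 1 + 1 = n by omega, show m - 1 + 1 = m by omega] at this
  -- S.ncard ≤ T.ncard + 1
  have h2 : S.ncard ≤ T.ncard + 1 := by
    set S1 := S ∩ {q | (nxt q : ℝ) ≤ x} with hS1
    set S2 := S ∩ {q | ¬ (nxt q : ℝ) ≤ x} with hS2
    have hsub : S ⊆ S1 ∪ S2 := by
      intro q hq
      by_cases h : (nxt q : ℝ) ≤ x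
      · exact Or.inl ⟨hq, h⟩
      · exact Or.inr ⟨hq, h⟩
    have hA : S1.ncard ≤ T.ncard := by
      apply Set.ncard_le_ncard_of_injOn nxt _ _ hTfin
      · rintro q ⟨⟨⟨n, hn1, rfl, k, hk, c1, c2, c3⟩, hx⟩, hnx⟩
        rw [nxt_pp hn1]
        refine ⟨⟨n + 1, by omega, rfl, k, hk, ?_, ?_, c3⟩, ?_⟩
        · simpa using c1
        · simpa using c2
        · have := hnx
          rw [Set.mem_setOf_eq, nxt_pp hn1] at this
          exact this
      · intro q hq q' hq' hpq
        obtain ⟨⟨⟨n, hn1, rfl, -⟩, -⟩, -⟩ := hq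
        obtain ⟨⟨⟨m, hm1, rfl, -⟩, -⟩, -⟩ := hq'
        have : prv (nxt (pp n)) = prv (nxt (pp m)) := by rw [hpq]
        rwa [nxt_pp hn1, nxt_pp hm1, prv_pp (by omega), prv_pp (by omega)] at this
    have hB : S2.ncard ≤ 1 := by
      rw [Set.ncard_le_one_iff (hSfin.subset Set.inter_subset_left)]
      rintro q q' ⟨hqS, hq⟩ ⟨hq'S, hq'⟩
      by_contra hne
      obtain ⟨⟨n, -, rfl, -⟩, hx⟩ := hqS
      obtain ⟨⟨m, -, rfl, -⟩, hx'⟩ := hq'S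
      rcases lt_or_gt_of_ne hne with h | h
      · exact hq (le_trans (by exact_mod_cast nxt_le (pp_prime n) (pp_prime m) h) hx')
      · exact hq' (le_trans (by exact_mod_cast nxt_le (pp_prime m) (pp_prime n) h) hx)
    calc S.ncard ≤ (S1 ∪ S2).ncard :=
          Set.ncard_le_ncard hsub ((hSfin.subset Set.inter_subset_left).union
            (hSfin.subset Set.inter_subset_left))
      _ ≤ S1.ncard + S2.ncard := Set.ncard_union_le _ _
      _ ≤ T.ncard + 1 := by omega
  omega
end

section
/- If q is a real number with 0 < q < 1, then (1-q) · Σ_{k≥3} ((k-2)/k) · q^{k-1} = 2 - q + 2·((1-q)/q)·ln(1-q). -/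
/-! Write `(k - 2)/k = 1 - 2/k`: the series splits into a geometric series and a tail of the
Mercator series `∑ q^k / k = -log (1 - q)`, which together give the closed form. -/

open Finset

theorem Real.hasSum_pow_div_tail {q : ℝ} (hq : |q| < 1) (m : ℕ) :
    HasSum (fun n : ℕ => q ^ (n + m + 1) / ((n + m : ℕ) + 1 : ℝ))
      (-Real.log (1 - q) - ∑ i ∈ range m, q ^ (i + 1) / ((i : ℝ) + 1)) :=
  (hasSum_nat_add_iff' (f := fun n : ℕ => q ^ (n + 1) / ((n : ℝ) + 1)) m).2
    (Real.hasSum_pow_div_log_of_abs_lt_one hq)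

theorem Real.hasSum_pow_div_add_three {q : ℝ} (hq : |q| < 1) :
    HasSum (fun n : ℕ => q ^ (n + 3) / ((n : ℝ) + 3))
      (-Real.log (1 - q) - q - q ^ 2 / 2) := by
  convert Real.hasSum_pow_div_tail hq 2 using 1
  · ext n
    push_cast
    ring_nf
  · simp only [sum_range_succ, sum_range_zero]
    norm_num
    ring

theorem Real.hasSum_sub_two_div_mul_pow {q : ℝ} (hq0 : q ≠ 0) (hq : |q| < 1) :
    HasSum (fun k : ℕ => (((k : ℝ) + 3) - 2) / ((k : ℝ) + 3) * q ^ (k + 2))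
      (q ^ 2 / (1 - q) + 2 * (Real.log (1 - q) + q + q ^ 2 / 2) / q) := by
  have hgeo : HasSum (fun k : ℕ => q ^ (k + 2)) (q ^ 2 / (1 - q)) := by
    simpa [pow_add, mul_comm, div_eq_mul_inv] using
      (hasSum_geometric_of_abs_lt_one hq).mul_left (q ^ 2)
  convert hgeo.sub ((Real.hasSum_pow_div_add_three hq).mul_left (2 / q)) using 1
  · rfl
  · funext k
    have hk : (k : ℝ) + 3 ≠ 0 := by positivity
    field_simp
    ring
  · ring

theorem stmt14 (q : ℝ) (h0 : 0 < q) (h1 : q < 1) :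
    (1 - q) * ∑' k : ℕ, (((k : ℝ) + 3) - 2) / ((k : ℝ) + 3) * q ^ (k + 2) =
      2 - q + 2 * ((1 - q) / q) * Real.log (1 - q) := by
  have hq : |q| < 1 := abs_lt.2 ⟨by linarith, h1⟩
  have h1q : 1 - q ≠ 0 := by linarith
  rw [(Real.hasSum_sub_two_div_mul_pow h0.ne' hq).tsum_eq]
  field_simp
  ring
end

section
/- For 0 < q < 1, the function f(q) = 2 - q + 2·((1-q)/q)·ln(1-q) is positive; in particular f(0.8010) > 0.39. -/
/-!
Since `log (1 - q) > ((1 - q) - (1 - q)⁻¹) / 2` on `(0, 1)` (this is `t < sinh t` at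
`t = -log (1 - q)`), replacing the logarithm by this bound turns `f q` into exactly `0`.
The numerical value needs `log 0.199 > -1.628`, i.e. `exp 1.628 > 1000 / 199`, which already
follows from `exp x ≥ 1 + x + x² / 2` at `x = 1.628 / 8`.
-/

open Real

lemma sub_inv_div_two_lt_log {x : ℝ} (hx₀ : 0 < x) (hx₁ : x < 1) :
    (x - x⁻¹) / 2 < log x := by
  have hsinh : sinh (log x⁻¹) = (x⁻¹ - x) / 2 := by
    rw [sinh_eq, exp_log (inv_pos.2 hx₀), exp_neg, exp_log (inv_pos.2 hx₀), inv_inv]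
  have h := self_lt_sinh_iff.2 (log_pos ((one_lt_inv₀ hx₀).2 hx₁))
  rw [hsinh, log_inv] at h
  linarith

lemma two_sub_add_mul_log_one_sub_pos {q : ℝ} (hq₀ : 0 < q) (hq₁ : q < 1) :
    0 < 2 - q + 2 * ((1 - q) / q) * log (1 - q) := by
  have hbound := sub_inv_div_two_lt_log (x := 1 - q) (by linarith) (by linarith)
  have hcoeff : 0 < 2 * ((1 - q) / q) := mul_pos two_pos (div_pos (by linarith) hq₀)
  have hzero : 2 - q + 2 * ((1 - q) / q) * (((1 - q) - (1 - q)⁻¹) / 2) = 0 := by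
    have : 1 - q ≠ 0 := by linarith
    field_simp
    ring
  linarith [mul_lt_mul_of_pos_left hbound hcoeff]

lemma neg_lt_log_zero_point_one_nine_nine : (-1.628 : ℝ) < log 0.199 := by
  have hquad : (1.2242 : ℝ) ≤ exp 0.2035 :=
    le_trans (by norm_num) (quadratic_le_exp_of_nonneg (by norm_num))
  have hexp : (1000 / 199 : ℝ) < exp 1.628 :=
    calc (1000 / 199 : ℝ) < 1.2242 ^ 8 := by norm_num
      _ ≤ exp 0.2035 ^ 8 := by gcongr
      _ = exp 1.628 := by rw [← exp_nat_mul]; norm_num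
  rw [lt_log_iff_exp_lt (by norm_num), exp_neg, inv_lt_comm₀ (exp_pos _) (by norm_num)]
  linarith

theorem stmt15 :
    (∀ q : ℝ, 0 < q → q < 1 →
      0 < 2 - q + 2 * ((1 - q) / q) * Real.log (1 - q)) ∧
    2 - 0.8010 + 2 * ((1 - 0.8010) / 0.8010) * Real.log (1 - 0.8010) > (0.39 : ℝ) := by
  refine ⟨fun q hq₀ hq₁ => two_sub_add_mul_log_one_sub_pos hq₀ hq₁, ?_⟩
  rw [show (1 : ℝ) - 0.8010 = 0.199 by norm_num]
  have := neg_lt_log_zero_point_one_nine_nine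
  norm_num
  linarith
end
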